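/- arXiv:2404.03990 — 2 statements merged into one kernel-verified Lean document; each statement's English description precedes it below -/
import Mathlib

section
/- Bound preservation of the scheme: if Δt, h > 0, β > 0, |ρ^k_{i,j}| ≤ 1 for all i,j, and ρ^{k+1} solves the implicit finite-volume scheme ρ^{k+1}_{i,j} = ρ^k_{i,j} − (Δt/h)[F^{k+1}_{i+1/2,j} − F^{k+1}_{i−1/2,j} + F^{k+1}_{i,j+1/2} − F^{k+1}_{i,j−1/2}] with upwind fluxes F^{k+1}_{i+1/2,j} = M(ρ^{k+1}_{i,j}, ρ^{k+1}_{i+1,j})[u_{i+1/2,j}]⁺ + M(ρ^{k+1}_{i+1,j}, ρ^{k+1}_{i,j})[u_{i+1/2,j}]⁻ (and analogously in the j-direction) and mobility M(x,y) = β[1+x]⁺[1−y]⁺, then |ρ^{k+1}_{i,j}| ≤ 1 for all i,j. -/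
open Finset

/-- Discrete periodic convolution `[J⋆φ]_{i,j} = h² ∑_{n,m} J_{n,m} φ_{i−n,j−m}`. -/
noncomputable def conv {N : ℕ} [NeZero N] (h : ℝ) (J φ : ZMod N × ZMod N → ℝ) :
    ZMod N × ZMod N → ℝ :=
  fun p => h ^ 2 * ∑ q : ZMod N × ZMod N, J q * φ (p.1 - q.1, p.2 - q.2)

/-- Discrete inner product `⟨φ,ψ⟩_h = h² ∑_{i,j} φ_{i,j} ψ_{i,j}`. -/
noncomputable def ip {N : ℕ} [NeZero N] (h : ℝ) (φ ψ : ZMod N × ZMod N → ℝ) : ℝ :=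
  h ^ 2 * ∑ p : ZMod N × ZMod N, φ p * ψ p

/-- Degenerate upwind mobility `M(x,y) = β [1+x]⁺ [1−y]⁺`. -/
noncomputable def Mob (β x y : ℝ) : ℝ := β * max (1 + x) 0 * max (1 - y) 0

/-!
If `ρ^{k+1}` left `[-1, 1]` at some cell, say `ρ^{k+1}_{i,j} < -1`, the mobility `M(ρ_{i,j}, ·)`
would vanish there, so the upwind fluxes could only carry mass into that cell: the discrete
divergence at `(i,j)` is `≤ 0`, and the implicit update gives `ρ^{k+1}_{i,j} ≥ ρ^k_{i,j} ≥ -1`.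
The case `ρ^{k+1}_{i,j} > 1` is symmetric, now because `M(·, ρ_{i,j})` vanishes.
-/

/-- The upwind flux from a cell with value `a` to a neighbouring cell with value `b`
across a face with velocity `u`. -/
noncomputable def upwindFlux (β a b u : ℝ) : ℝ :=
  Mob β a b * max u 0 + Mob β b a * min u 0

section Mobility

variable {β x y : ℝ}

lemma Mob_nonneg (hβ : 0 ≤ β) : 0 ≤ Mob β x y := by
  unfold Mob
  positivity

lemma Mob_eq_zero_of_le_neg_one (hx : x ≤ -1) : Mob β x y = 0 := by
  simp [Mob, max_eq_right (by linarith : 1 + x ≤ 0)]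

lemma Mob_eq_zero_of_one_le (hy : 1 ≤ y) : Mob β x y = 0 := by
  simp [Mob, max_eq_right (by linarith : 1 - y ≤ 0)]

end Mobility

section Flux

variable {β a b u : ℝ}

lemma upwindFlux_nonpos_of_le_neg_one (hβ : 0 ≤ β) (ha : a ≤ -1) : upwindFlux β a b u ≤ 0 := by
  rw [upwindFlux, Mob_eq_zero_of_le_neg_one ha, zero_mul, zero_add]
  exact mul_nonpos_of_nonneg_of_nonpos (Mob_nonneg hβ) (min_le_right _ _)

lemma upwindFlux_nonneg_of_le_neg_one (hβ : 0 ≤ β) (hb : b ≤ -1) : 0 ≤ upwindFlux β a b u := by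
  rw [upwindFlux, Mob_eq_zero_of_le_neg_one hb, zero_mul, add_zero]
  exact mul_nonneg (Mob_nonneg hβ) (le_max_right _ _)

lemma upwindFlux_nonneg_of_one_le (hβ : 0 ≤ β) (ha : 1 ≤ a) : 0 ≤ upwindFlux β a b u := by
  rw [upwindFlux, Mob_eq_zero_of_one_le ha, zero_mul, add_zero]
  exact mul_nonneg (Mob_nonneg hβ) (le_max_right _ _)

lemma upwindFlux_nonpos_of_one_le (hβ : 0 ≤ β) (hb : 1 ≤ b) : upwindFlux β a b u ≤ 0 := by
  rw [upwindFlux, Mob_eq_zero_of_one_le hb, zero_mul, zero_add]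
  exact mul_nonpos_of_nonneg_of_nonpos (Mob_nonneg hβ) (min_le_right _ _)

variable {e w n s ue uw un us : ℝ}

lemma upwind_divergence_nonpos_of_le_neg_one (hβ : 0 ≤ β) (ha : a ≤ -1) :
    upwindFlux β a e ue - upwindFlux β w a uw + upwindFlux β a n un - upwindFlux β s a us
      ≤ 0 := by
  linarith [upwindFlux_nonpos_of_le_neg_one (b := e) (u := ue) hβ ha,
    upwindFlux_nonneg_of_le_neg_one (a := w) (u := uw) hβ ha,
    upwindFlux_nonpos_of_le_neg_one (b := n) (u := un) hβ ha,
    upwindFlux_nonneg_of_le_neg_one (a := s) (u := us) hβ ha]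

lemma upwind_divergence_nonneg_of_one_le (hβ : 0 ≤ β) (ha : 1 ≤ a) :
    0 ≤ upwindFlux β a e ue - upwindFlux β w a uw + upwindFlux β a n un
      - upwindFlux β s a us := by
  linarith [upwindFlux_nonneg_of_one_le (b := e) (u := ue) hβ ha,
    upwindFlux_nonpos_of_one_le (a := w) (u := uw) hβ ha,
    upwindFlux_nonneg_of_one_le (b := n) (u := un) hβ ha,
    upwindFlux_nonpos_of_one_le (a := s) (u := us) hβ ha]

end Flux

lemma abs_le_one_of_eq_sub_mul {r₀ r₁ c d : ℝ} (hc : 0 ≤ c) (hr₀ : |r₀| ≤ 1)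
    (hr₁ : r₁ = r₀ - c * d) (hlow : r₁ ≤ -1 → d ≤ 0) (hup : 1 ≤ r₁ → 0 ≤ d) : |r₁| ≤ 1 := by
  rw [abs_le] at hr₀ ⊢
  constructor
  · by_contra! h
    nlinarith [mul_nonpos_of_nonneg_of_nonpos hc (hlow h.le)]
  · by_contra! h
    nlinarith [mul_nonneg hc (hup h.le)]

theorem bound_preservation {N : ℕ} [NeZero N] (Δt h β : ℝ)
    (hΔt : 0 < Δt) (hh : 0 < h) (hβ : 0 < β)
    (ρ0 ρ1 ux uy Fx Fy : ZMod N × ZMod N → ℝ)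
    (hbound : ∀ p : ZMod N × ZMod N, |ρ0 p| ≤ 1)
    (hFx : ∀ p : ZMod N × ZMod N,
      Fx p = Mob β (ρ1 p) (ρ1 (p.1 + 1, p.2)) * max (ux p) 0
        + Mob β (ρ1 (p.1 + 1, p.2)) (ρ1 p) * min (ux p) 0)
    (hFy : ∀ p : ZMod N × ZMod N,
      Fy p = Mob β (ρ1 p) (ρ1 (p.1, p.2 + 1)) * max (uy p) 0
        + Mob β (ρ1 (p.1, p.2 + 1)) (ρ1 p) * min (uy p) 0)
    (hupdate : ∀ p : ZMod N × ZMod N,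
      ρ1 p = ρ0 p - (Δt / h) *
        (Fx p - Fx (p.1 - 1, p.2) + Fy p - Fy (p.1, p.2 - 1))) :
    ∀ p : ZMod N × ZMod N, |ρ1 p| ≤ 1 := by
  intro p
  have hdiv : Fx p - Fx (p.1 - 1, p.2) + Fy p - Fy (p.1, p.2 - 1) =
      upwindFlux β (ρ1 p) (ρ1 (p.1 + 1, p.2)) (ux p)
        - upwindFlux β (ρ1 (p.1 - 1, p.2)) (ρ1 p) (ux (p.1 - 1, p.2))
        + upwindFlux β (ρ1 p) (ρ1 (p.1, p.2 + 1)) (uy p)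
        - upwindFlux β (ρ1 (p.1, p.2 - 1)) (ρ1 p) (uy (p.1, p.2 - 1)) := by
    simp only [upwindFlux, hFx, hFy, sub_add_cancel]
  refine abs_le_one_of_eq_sub_mul (div_pos hΔt hh).le (hbound p) (hupdate p) ?_ ?_ <;>
    rw [hdiv]
  · exact upwind_divergence_nonpos_of_le_neg_one hβ.le
  · exact upwind_divergence_nonneg_of_one_le hβ.le
end

section
/- Semi-discrete energy dissipation: if t ↦ ρ(t) is a differentiable grid-function-valued curve satisfying the semi-discrete scheme (the conservative upwind flux update with velocities derived from w(t)_{i,j} = f'(ρ(t)_{i,j}) + 2ρ(t)_{i,j} − 2[J⋆ρ(t)]_{i,j}), then the discrete free energy E_h(t) := h² ∑_{i,j}[f(ρ(t)_{i,j}) + ρ(t)_{i,j}²] − ⟨J⋆ρ(t), ρ(t)⟩_h satisfies dE_h/dt = ⟨ρ'(t), w(t)⟩_h ≤ 0. -/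
open Finset

/-!
Since `J` is even, convolution with `J` is self-adjoint for `⟨·,·⟩_h`, so the quadratic term
`⟨J⋆ρ, ρ⟩_h` has derivative `2⟨ρ', J⋆ρ⟩_h` and the chain rule gives `dE_h/dt = ⟨ρ', w⟩_h`.
Summing the conservative scheme by parts on the periodic grid turns `⟨ρ', w⟩_h` into
`-h² ∑ (Fx·ux + Fy·uy)`, and each upwind flux has the sign of its velocity because the
mobilities are nonnegative.
-/

section Torus

variable {G : Type*} [AddCommGroup G] [Fintype G]

theorem sum_sub_shift_mul (F w : G → ℝ) (e : G) :
    ∑ p, (F p - F (p - e)) * w p = ∑ p, F p * (w p - w (p + e)) := by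
  have hshift : ∑ p, F (p - e) * w p = ∑ p, F p * w (p + e) :=
    Fintype.sum_equiv (Equiv.subRight e) _ _ fun p => by simp
  simp only [sub_mul, mul_sub, sum_sub_distrib, hshift]

theorem sum_sub_shift_mul_eq_mul_sum {h : ℝ} (hh : h ≠ 0) {F w u : G → ℝ} {e : G}
    (hu : ∀ p, u p = -(w (p + e) - w p) / h) :
    ∑ p, (F p - F (p - e)) * w p = h * ∑ p, F p * u p := by
  rw [sum_sub_shift_mul, mul_sum]
  refine sum_congr rfl fun p _ => ?_
  rw [hu p]
  field_simp
  ring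

end Torus

theorem mob_nonneg {β : ℝ} (hβ : 0 ≤ β) (x y : ℝ) : 0 ≤ Mob β x y := by
  unfold Mob
  positivity

theorem upwind_flux_mul_nonneg {a b : ℝ} (ha : 0 ≤ a) (hb : 0 ≤ b) (u : ℝ) :
    0 ≤ (a * max u 0 + b * min u 0) * u := by
  rcases le_total 0 u with hu | hu
  · rw [max_eq_left hu, min_eq_right hu, mul_zero, add_zero, mul_assoc]
    exact mul_nonneg ha (mul_self_nonneg u)
  · rw [max_eq_right hu, min_eq_left hu, mul_zero, zero_add, mul_assoc]
    exact mul_nonneg hb (mul_self_nonneg u)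

section Grid

variable {N : ℕ} [NeZero N] {h : ℝ}

theorem ip_comm (φ ψ : ZMod N × ZMod N → ℝ) : ip h φ ψ = ip h ψ φ := by
  simp only [ip, mul_comm (φ _)]

theorem conv_eq_sum_sub (J φ : ZMod N × ZMod N → ℝ) (p : ZMod N × ZMod N) :
    conv h J φ p = h ^ 2 * ∑ r, J (p - r) * φ r := by
  unfold conv
  congr 1
  exact Fintype.sum_equiv (Equiv.subLeft p) _ _ fun q => by
    rw [Equiv.subLeft_apply, sub_sub_cancel]
    rfl

theorem ip_conv_left {J : ZMod N × ZMod N → ℝ} (hJ : J.Even) (φ ψ : ZMod N × ZMod N → ℝ) :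
    ip h (conv h J φ) ψ = ip h φ (conv h J ψ) := by
  have hJ' : ∀ p r : ZMod N × ZMod N, J (p - r) = J (r - p) := fun p r => by
    rw [← neg_sub, hJ]
  simp only [ip, conv_eq_sum_sub, sum_mul, mul_sum]
  rw [sum_comm]
  exact sum_congr rfl fun r _ => sum_congr rfl fun p _ => by rw [hJ' p r]; ring

theorem hasDerivAt_ip {φ ψ : ℝ → ZMod N × ZMod N → ℝ} {φ' ψ' : ZMod N × ZMod N → ℝ} {t : ℝ}
    (hφ : ∀ p, HasDerivAt (fun s => φ s p) (φ' p) t)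
    (hψ : ∀ p, HasDerivAt (fun s => ψ s p) (ψ' p) t) :
    HasDerivAt (fun s => ip h (φ s) (ψ s)) (ip h φ' (ψ t) + ip h (φ t) ψ') t := by
  refine ((HasDerivAt.fun_sum fun p _ => (hφ p).mul (hψ p)).const_mul (h ^ 2)).congr_deriv ?_
  simp only [ip, ← mul_add, sum_add_distrib]

theorem hasDerivAt_conv (J : ZMod N × ZMod N → ℝ) {ρ : ℝ → ZMod N × ZMod N → ℝ}
    {ρ' : ZMod N × ZMod N → ℝ} {t : ℝ} (hρ : ∀ p, HasDerivAt (fun s => ρ s p) (ρ' p) t)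
    (p : ZMod N × ZMod N) :
    HasDerivAt (fun s => conv h J (ρ s) p) (conv h J ρ' p) t :=
  (HasDerivAt.fun_sum fun q _ => (hρ (p - q)).const_mul (J q)).const_mul (h ^ 2)

theorem hasDerivAt_ip_conv_self {J : ZMod N × ZMod N → ℝ} (hJ : J.Even)
    {ρ : ℝ → ZMod N × ZMod N → ℝ} {ρ' : ZMod N × ZMod N → ℝ} {t : ℝ}
    (hρ : ∀ p, HasDerivAt (fun s => ρ s p) (ρ' p) t) :
    HasDerivAt (fun s => ip h (conv h J (ρ s)) (ρ s)) (2 * ip h ρ' (conv h J (ρ t))) t := by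
  refine (hasDerivAt_ip (hasDerivAt_conv J hρ) hρ).congr_deriv ?_
  rw [ip_conv_left hJ, ip_comm (conv h J (ρ t))]
  ring

theorem hasDerivAt_sum_local_energy {f : ℝ → ℝ} (hf : Differentiable ℝ f)
    {ρ : ℝ → ZMod N × ZMod N → ℝ} {ρ' : ZMod N × ZMod N → ℝ} {t : ℝ}
    (hρ : ∀ p, HasDerivAt (fun s => ρ s p) (ρ' p) t) :
    HasDerivAt (fun s => h ^ 2 * ∑ p, (f (ρ s p) + ρ s p ^ 2))
      (ip h ρ' fun p => deriv f (ρ t p) + 2 * ρ t p) t := by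
  have hlocal : ∀ p, HasDerivAt (fun s => f (ρ s p) + ρ s p ^ 2)
      (ρ' p * (deriv f (ρ t p) + 2 * ρ t p)) t := fun p => by
    refine (((hf _).hasDerivAt.comp t (hρ p)).add ((hρ p).fun_pow 2)).congr_deriv ?_
    norm_num
    ring
  exact (HasDerivAt.fun_sum fun p _ => hlocal p).const_mul (h ^ 2)

end Grid

theorem ip_upwind_scheme_nonpos {N : ℕ} [NeZero N] {h β : ℝ} (hh : h ≠ 0) (hβ : 0 ≤ β)
    {ρ ρ' w ux uy Fx Fy : ZMod N × ZMod N → ℝ}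
    (hux : ∀ p, ux p = -(w (p.1 + 1, p.2) - w p) / h)
    (huy : ∀ p, uy p = -(w (p.1, p.2 + 1) - w p) / h)
    (hFx : ∀ p, Fx p = Mob β (ρ p) (ρ (p.1 + 1, p.2)) * max (ux p) 0
        + Mob β (ρ (p.1 + 1, p.2)) (ρ p) * min (ux p) 0)
    (hFy : ∀ p, Fy p = Mob β (ρ p) (ρ (p.1, p.2 + 1)) * max (uy p) 0
        + Mob β (ρ (p.1, p.2 + 1)) (ρ p) * min (uy p) 0)
    (hscheme : ∀ p, ρ' p = -(1 / h) * (Fx p - Fx (p.1 - 1, p.2) + Fy p - Fy (p.1, p.2 - 1))) :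
    ip h ρ' w ≤ 0 := by
  have hux' : ∀ p, ux p = -(w (p + (1, 0)) - w p) / h := fun ⟨i, j⟩ => by simp [hux]
  have huy' : ∀ p, uy p = -(w (p + (0, 1)) - w p) / h := fun ⟨i, j⟩ => by simp [huy]
  have hdissipation : 0 ≤ ∑ p, (Fx p * ux p + Fy p * uy p) := sum_nonneg fun p _ => by
    rw [hFx, hFy]
    exact add_nonneg (upwind_flux_mul_nonneg (mob_nonneg hβ _ _) (mob_nonneg hβ _ _) _)
      (upwind_flux_mul_nonneg (mob_nonneg hβ _ _) (mob_nonneg hβ _ _) _)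
  have hsum : ∑ p, ρ' p * w p = -∑ p, (Fx p * ux p + Fy p * uy p) :=
    calc ∑ p, ρ' p * w p
        = -(1 / h) * (∑ p, (Fx p - Fx (p - (1, 0))) * w p
            + ∑ p, (Fy p - Fy (p - (0, 1))) * w p) := by
          simp only [hscheme, mul_sum, ← sum_add_distrib]
          exact sum_congr rfl fun ⟨i, j⟩ _ => by simp only [Prod.mk_sub_mk, sub_zero]; ring
      _ = -∑ p, (Fx p * ux p + Fy p * uy p) := by
          rw [sum_sub_shift_mul_eq_mul_sum hh hux', sum_sub_shift_mul_eq_mul_sum hh huy',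
            sum_add_distrib]
          field_simp
  rw [ip, hsum, mul_neg, neg_nonpos]
  exact mul_nonneg (sq_nonneg h) hdissipation

theorem semidiscrete_energy_dissipation {N : ℕ} [NeZero N] (h β : ℝ)
    (hh : 0 < h) (hβ : 0 < β)
    (J : ZMod N × ZMod N → ℝ)
    (hJeven : ∀ q : ZMod N × ZMod N, J q = J (-q.1, -q.2))
    (f : ℝ → ℝ) (hf : Differentiable ℝ f)
    (ρ ρ' w ux uy Fx Fy : ℝ → ZMod N × ZMod N → ℝ)
    (hρ : ∀ (t : ℝ) (p : ZMod N × ZMod N), HasDerivAt (fun s => ρ s p) (ρ' t p) t)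
    (hw : ∀ (t : ℝ) (p : ZMod N × ZMod N),
      w t p = deriv f (ρ t p) + 2 * ρ t p - 2 * conv h J (ρ t) p)
    (hux : ∀ (t : ℝ) (p : ZMod N × ZMod N),
      ux t p = -(w t (p.1 + 1, p.2) - w t p) / h)
    (huy : ∀ (t : ℝ) (p : ZMod N × ZMod N),
      uy t p = -(w t (p.1, p.2 + 1) - w t p) / h)
    (hFx : ∀ (t : ℝ) (p : ZMod N × ZMod N),
      Fx t p = Mob β (ρ t p) (ρ t (p.1 + 1, p.2)) * max (ux t p) 0
        + Mob β (ρ t (p.1 + 1, p.2)) (ρ t p) * min (ux t p) 0)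
    (hFy : ∀ (t : ℝ) (p : ZMod N × ZMod N),
      Fy t p = Mob β (ρ t p) (ρ t (p.1, p.2 + 1)) * max (uy t p) 0
        + Mob β (ρ t (p.1, p.2 + 1)) (ρ t p) * min (uy t p) 0)
    (hscheme : ∀ (t : ℝ) (p : ZMod N × ZMod N),
      ρ' t p = -(1 / h) *
        (Fx t p - Fx t (p.1 - 1, p.2) + Fy t p - Fy t (p.1, p.2 - 1))) :
    ∀ t : ℝ,
      HasDerivAt
        (fun s => h ^ 2 * ∑ p : ZMod N × ZMod N, (f (ρ s p) + (ρ s p) ^ 2)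
          - ip h (conv h J (ρ s)) (ρ s))
        (ip h (ρ' t) (w t)) t
      ∧ ip h (ρ' t) (w t) ≤ 0 := by
  intro t
  have hJ : J.Even := fun q => (hJeven q).symm
  refine ⟨?_, ip_upwind_scheme_nonpos hh.ne' hβ.le (hux t) (huy t) (hFx t) (hFy t) (hscheme t)⟩
  refine ((hasDerivAt_sum_local_energy hf (hρ t)).sub
    (hasDerivAt_ip_conv_self hJ (hρ t))).congr_deriv ?_
  simp only [ip, hw, mul_sub, sum_sub_distrib, mul_left_comm _ (2 : ℝ), ← mul_sum]
end
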